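/- arXiv:2307.01339 — 2 statements merged into one kernel-verified Lean document; each statement's English description precedes it below -/
import Mathlib

section
/- For every r with a² + r² > 0, the gradient invariant I₆ of the Kerr–(anti-)de Sitter black hole restricted to the symmetry axis θ = 0 satisfies I₆(r, 0) = −27648 m⁴ a² (a⁶ − 21a⁴r² + 35a²r⁴ − 7r⁶)² (Λr⁴ + (Λa² − 3)r² + 6mr − 3a²)/(a² + r²)¹⁵; in particular I₆(r, 0) = 0 whenever Λr⁴ + (Λa² − 3)r² + 6mr − 3a² = 0, i.e. at the stationary horizon radii. -/
noncomputable section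

namespace KerrAdS

/-- `ρ² = r² + a² cos²θ` in Boyer–Lindquist coordinates. -/
def rho2 (a r θ : ℝ) : ℝ := r ^ 2 + a ^ 2 * Real.cos θ ^ 2

/-- The complex combination `I₁ + i I₂ = 48 m² (r − i a cos θ)⁶ / ρ¹²`
(the orientation convention `I₁ + iI₂ = 48 Ψ₂²` with `Ψ₂ = −m/(r + i a cos θ)³`). -/
def Ic (a m r θ : ℝ) : ℂ :=
  48 * (m : ℂ) ^ 2 * ((r : ℂ) - Complex.I * ((a * Real.cos θ : ℝ) : ℂ)) ^ 6 /
    ((rho2 a r θ : ℝ) : ℂ) ^ 6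

/-- The Weyl invariant `I₁ = C_{αβγδ} C^{αβγδ}` of the Kerr–(anti-)de Sitter black hole. -/
def I1 (a m r θ : ℝ) : ℝ := (Ic a m r θ).re

/-- The Chern–Pontryagin invariant `I₂ = C*_{αβγδ} C^{αβγδ}`. -/
def I2 (a m r θ : ℝ) : ℝ := (Ic a m r θ).im

/-- `Δ_r = (1 − Λr²/3)(r² + a²) − 2mr`. -/
def Δr (a m Λ r : ℝ) : ℝ := (1 - Λ * r ^ 2 / 3) * (r ^ 2 + a ^ 2) - 2 * m * r

/-- `Δ_θ = 1 + (a²Λ/3) cos²θ`. -/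
def Δθ (a Λ θ : ℝ) : ℝ := 1 + a ^ 2 * Λ / 3 * Real.cos θ ^ 2

/-- The gradient invariant `I₅ = ∇_μ I₁ ∇^μ I₁
  = (Δ_r/ρ²)(∂_r I₁)² + (Δ_θ/ρ²)(∂_θ I₁)²`. -/
def I5 (a m Λ r θ : ℝ) : ℝ :=
  Δr a m Λ r / rho2 a r θ * (deriv (fun r' => I1 a m r' θ) r) ^ 2 +
    Δθ a Λ θ / rho2 a r θ * (deriv (fun θ' => I1 a m r θ') θ) ^ 2

/-- The gradient invariant `I₆ = ∇_μ I₂ ∇^μ I₂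
  = (Δ_r/ρ²)(∂_r I₂)² + (Δ_θ/ρ²)(∂_θ I₂)²`. -/
def I6 (a m Λ r θ : ℝ) : ℝ :=
  Δr a m Λ r / rho2 a r θ * (deriv (fun r' => I2 a m r' θ) r) ^ 2 +
    Δθ a Λ θ / rho2 a r θ * (deriv (fun θ' => I2 a m r θ') θ) ^ 2

/-- The gradient invariant `I₇ = ∇_μ I₁ ∇^μ I₂
  = (Δ_r/ρ²)(∂_r I₁)(∂_r I₂) + (Δ_θ/ρ²)(∂_θ I₁)(∂_θ I₂)`. -/
def I7 (a m Λ r θ : ℝ) : ℝ :=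
  Δr a m Λ r / rho2 a r θ *
      (deriv (fun r' => I1 a m r' θ) r) * (deriv (fun r' => I2 a m r' θ) r) +
    Δθ a Λ θ / rho2 a r θ *
      (deriv (fun θ' => I1 a m r θ') θ) * (deriv (fun θ' => I2 a m r θ') θ)

/-- The ergosurface polynomial
`E = Λa⁴c⁴ − Λa⁴c² − Λa²r² − Λr⁴ + 3a²c² − 6mr + 3r²`, `c = cos θ`. -/
def E (a m Λ r θ : ℝ) : ℝ :=
  Λ * a ^ 4 * Real.cos θ ^ 4 - Λ * a ^ 4 * Real.cos θ ^ 2 - Λ * a ^ 2 * r ^ 2 - Λ * r ^ 4 +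
    3 * a ^ 2 * Real.cos θ ^ 2 - 6 * m * r + 3 * r ^ 2

/-- The differential Weyl invariant `I₃ = ∇_μ C_{αβγδ} ∇^μ C^{αβγδ}`
(explicit closed form). -/
def I3 (a m Λ r θ : ℝ) : ℝ :=
  240 * m ^ 2 / rho2 a r θ ^ 9 *
    (a ^ 4 * Real.cos θ ^ 4 - 4 * a ^ 3 * Real.cos θ ^ 3 * r
      - 6 * a ^ 2 * Real.cos θ ^ 2 * r ^ 2 + 4 * a * Real.cos θ * r ^ 3 + r ^ 4) *
    (a ^ 4 * Real.cos θ ^ 4 + 4 * a ^ 3 * Real.cos θ ^ 3 * r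
      - 6 * a ^ 2 * Real.cos θ ^ 2 * r ^ 2 - 4 * a * Real.cos θ * r ^ 3 + r ^ 4) *
    E a m Λ r θ

/-- The mixed differential Weyl invariant `I₄ = ∇_μ C_{αβγδ} ∇^μ C*^{αβγδ}`
(explicit closed form). -/
def I4 (a m Λ r θ : ℝ) : ℝ :=
  1920 * a * Real.cos θ * r * m ^ 2 / rho2 a r θ ^ 9 * E a m Λ r θ *
    (a ^ 2 * Real.cos θ ^ 2 - 2 * a * Real.cos θ * r - r ^ 2) *
    (a ^ 2 * Real.cos θ ^ 2 + 2 * a * Real.cos θ * r - r ^ 2) *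
    (a ^ 2 * Real.cos θ ^ 2 - r ^ 2)

end KerrAdS

/-!
`I₂` depends on `θ` only through `cos θ`, so `θ ↦ I₂` is even and its derivative vanishes at
`θ = 0`. On the axis `I₂` is an explicit rational function of `r`, and `I₆` reduces to
`(Δ_r/ρ²)(∂_r I₂)²`, which is `Δ_r` times a perfect square over `(r² + a²)¹⁵`; finally
`Λr⁴ + (Λa² − 3)r² + 6mr − 3a² = −3Δ_r`.
-/

theorem Function.Even.deriv_zero {𝕜 F : Type*} [NontriviallyNormedField 𝕜] [CharZero 𝕜]
    [NormedAddCommGroup F] [NormedSpace 𝕜 F] {f : 𝕜 → F} (hf : f.Even) : deriv f 0 = 0 := by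
  have h := deriv_comp_neg f (0 : 𝕜)
  simp only [hf _, neg_zero] at h
  have := IsAddTorsionFree.of_isTorsionFree 𝕜 F
  exact self_eq_neg.mp h

theorem Complex.im_ofReal_sub_I_mul_pow_six (x y : ℝ) :
    (((x : ℂ) - I * y) ^ 6).im = -6 * x ^ 5 * y + 20 * x ^ 3 * y ^ 3 - 6 * x * y ^ 5 := by
  simp only [pow_succ, pow_zero, one_mul, mul_im, mul_re, sub_re, sub_im, ofReal_re, ofReal_im,
    I_re, I_im]
  ring

namespace KerrAdS

theorem I2_eq (a m r θ : ℝ) :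
    I2 a m r θ = 48 * m ^ 2 * (-6 * r ^ 5 * (a * Real.cos θ) + 20 * r ^ 3 * (a * Real.cos θ) ^ 3
      - 6 * r * (a * Real.cos θ) ^ 5) / rho2 a r θ ^ 6 := by
  rw [I2, Ic, ← Complex.ofReal_pow (rho2 a r θ), Complex.div_ofReal_im,
    show (48 : ℂ) * (m : ℂ) ^ 2 = ((48 * m ^ 2 : ℝ) : ℂ) by push_cast; ring,
    Complex.im_ofReal_mul, Complex.im_ofReal_sub_I_mul_pow_six]

theorem even_I2 (a m r : ℝ) : (fun θ => I2 a m r θ).Even := fun θ => by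
  simp only [I2, Ic, rho2, Real.cos_neg]

theorem I2_axis (a m r : ℝ) :
    I2 a m r 0 = -96 * m ^ 2 * a * (3 * r ^ 5 - 10 * a ^ 2 * r ^ 3 + 3 * a ^ 4 * r) /
      (r ^ 2 + a ^ 2) ^ 6 := by
  rw [I2_eq, rho2, Real.cos_zero]
  ring

theorem hasDerivAt_I2_axis (a m : ℝ) {r : ℝ} (hr : r ^ 2 + a ^ 2 ≠ 0) :
    HasDerivAt (fun r => I2 a m r 0)
      (-288 * m ^ 2 * a * (a ^ 6 - 21 * a ^ 4 * r ^ 2 + 35 * a ^ 2 * r ^ 4 - 7 * r ^ 6) /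
        (r ^ 2 + a ^ 2) ^ 7) r := by
  simp only [I2_axis]
  have hnum : HasDerivAt (fun r : ℝ => 3 * r ^ 5 - 10 * a ^ 2 * r ^ 3 + 3 * a ^ 4 * r)
      (15 * r ^ 4 - 30 * a ^ 2 * r ^ 2 + 3 * a ^ 4) r := by
    refine ((((hasDerivAt_pow 5 r).const_mul 3).sub ((hasDerivAt_pow 3 r).const_mul
      (10 * a ^ 2))).add ((hasDerivAt_id r).const_mul (3 * a ^ 4))).congr_deriv ?_
    push_cast
    ring
  have hden : HasDerivAt (fun r : ℝ => (r ^ 2 + a ^ 2) ^ 6) (12 * r * (r ^ 2 + a ^ 2) ^ 5) r := by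
    refine (((hasDerivAt_pow 2 r).add_const (a ^ 2)).pow 6).congr_deriv ?_
    push_cast
    ring
  refine ((hnum.const_mul (-96 * m ^ 2 * a)).div hden (pow_ne_zero 6 hr)).congr_deriv ?_
  field_simp
  ring

theorem I6_axis_eq_mul_Δr (a m Λ : ℝ) {r : ℝ} (hr : r ^ 2 + a ^ 2 ≠ 0) :
    I6 a m Λ r 0 = 82944 * m ^ 4 * a ^ 2 *
      (a ^ 6 - 21 * a ^ 4 * r ^ 2 + 35 * a ^ 2 * r ^ 4 - 7 * r ^ 6) ^ 2 * Δr a m Λ r /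
        (r ^ 2 + a ^ 2) ^ 15 := by
  rw [I6, (hasDerivAt_I2_axis a m hr).deriv, (even_I2 a m r).deriv_zero, rho2, Real.cos_zero,
    one_pow, mul_one]
  field_simp
  ring

/-- On the symmetry axis `θ = 0` the gradient invariant `I₆` of the
Kerr–(anti-)de Sitter black hole takes the stated closed form; in particular it vanishes
at the stationary horizon radii, i.e. whenever `Λr⁴ + (Λa² − 3)r² + 6mr − 3a² = 0`. -/
theorem I6_axis (a m Λ : ℝ) :
    ∀ r : ℝ, 0 < a ^ 2 + r ^ 2 →
      I6 a m Λ r 0 =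
        -(27648 * m ^ 4 * a ^ 2 *
            (a ^ 6 - 21 * a ^ 4 * r ^ 2 + 35 * a ^ 2 * r ^ 4 - 7 * r ^ 6) ^ 2 *
            (Λ * r ^ 4 + (Λ * a ^ 2 - 3) * r ^ 2 + 6 * m * r - 3 * a ^ 2)) /
          (a ^ 2 + r ^ 2) ^ 15 ∧
      (Λ * r ^ 4 + (Λ * a ^ 2 - 3) * r ^ 2 + 6 * m * r - 3 * a ^ 2 = 0 →
        I6 a m Λ r 0 = 0) := by
  intro r hr
  have hΔr : Λ * r ^ 4 + (Λ * a ^ 2 - 3) * r ^ 2 + 6 * m * r - 3 * a ^ 2 = -3 * Δr a m Λ r := by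
    rw [Δr]
    ring
  rw [I6_axis_eq_mul_Δr a m Λ (by rw [add_comm]; exact hr.ne'), hΔr]
  refine ⟨by ring, fun h => ?_⟩
  rw [show Δr a m Λ r = 0 by linarith, mul_zero, zero_div]

end KerrAdS
end
end

section
/- The first Abdelqader–Lake syzygy holds for the Kerr–(anti-)de Sitter black hole: for all real a, m, Λ and all (r, θ) with r² + a²cos²θ > 0, one has I₆ − I₅ + (12/5)(I₁I₃ − I₂I₄) = 0. -/
/-!
`I₁ + iI₂ = 48m²/ζ⁶` is a holomorphic function of `ζ = r + i a cos θ`, with `∂_r ζ = 1` and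
`∂_θ ζ = -i a sin θ`. For any complex function `F`, `(∂I₂)² - (∂I₁)² = -Re((∂F)²)`, so
`I₆ - I₅ = -Re((Δ_r - a² sin²θ Δ_θ)/ρ² · (F'(ζ))²)`, and `Δ_r - a² sin²θ Δ_θ = E/3`.
On the other side `I₃ + iI₄ = 240m²E ζ̄⁸/ρ¹⁸ = 240m²E/(ρ²ζ⁸)` and
`I₁I₃ - I₂I₄ = Re((I₁ + iI₂)(I₃ + iI₄))`, so the syzygy reduces to the identity
`(E/3ρ²)(288m²/ζ⁷)² = (12/5)(48m²/ζ⁶)(240m²E/(ρ²ζ⁸))` of rational functions of `ζ`.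
-/

noncomputable section

theorem deriv_im_sq_sub_deriv_re_sq {f : ℝ → ℂ} {f' : ℂ} {x : ℝ}
    (hf : HasDerivAt f f' x) :
    deriv (fun y => (f y).im) x ^ 2 - deriv (fun y => (f y).re) x ^ 2 = -(f' ^ 2).re := by
  have hre : HasDerivAt (fun y => (f y).re) f'.re x :=
    Complex.reCLM.hasFDerivAt.comp_hasDerivAt x hf
  have him : HasDerivAt (fun y => (f y).im) f'.im x :=
    Complex.imCLM.hasFDerivAt.comp_hasDerivAt x hf
  rw [hre.deriv, him.deriv, sq f', Complex.mul_re]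
  ring

theorem HasDerivAt.const_div_pow {𝕜 𝕜' : Type*} [NontriviallyNormedField 𝕜]
    [NontriviallyNormedField 𝕜'] [NormedAlgebra 𝕜 𝕜'] {γ : 𝕜 → 𝕜'} {γ' : 𝕜'} {x : 𝕜}
    (hγ : HasDerivAt γ γ' x) (c : 𝕜') (n : ℕ) (h0 : γ x ≠ 0) :
    HasDerivAt (fun y => c / γ y ^ n) (-(n * c * γ') / γ x ^ (n + 1)) x := by
  cases n with
  | zero => simpa using hasDerivAt_const x c
  | succ n =>
    have h := (hasDerivAt_const x c).fun_div (hγ.fun_pow (n + 1)) (pow_ne_zero _ h0)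
    refine h.congr_deriv ?_
    rw [add_tsub_cancel_right]
    field_simp
    ring

theorem Complex.ofReal_add_ofReal_mul_I_sq (x y : ℝ) :
    ((x : ℂ) + y * I) ^ 2 = ((x ^ 2 - y ^ 2 : ℝ) : ℂ) + ((2 * x * y : ℝ) : ℂ) * I := by
  push_cast
  linear_combination y ^ 2 * I_sq

namespace KerrAdS

open Complex ComplexConjugate

def ζ (a r θ : ℝ) : ℂ := r + (a * Real.cos θ : ℝ) * I

theorem normSq_ζ (a r θ : ℝ) : normSq (ζ a r θ) = rho2 a r θ := by
  rw [ζ, normSq_add_mul_I, rho2]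
  ring

theorem ζ_ne_zero {a r θ : ℝ} (hρ : rho2 a r θ ≠ 0) : ζ a r θ ≠ 0 :=
  fun h0 => hρ (by rw [← normSq_ζ, h0, map_zero])

theorem conj_ζ (a r θ : ℝ) : conj (ζ a r θ) = r + (-(a * Real.cos θ) : ℝ) * I := by
  simp only [ζ, map_add, map_mul, conj_ofReal, conj_I, ofReal_neg]
  ring

theorem inv_ζ (a r θ : ℝ) : (ζ a r θ)⁻¹ = conj (ζ a r θ) / rho2 a r θ := by
  rw [inv_def, normSq_ζ, ofReal_inv, div_eq_mul_inv]

theorem Ic_eq_div_pow (a m r θ : ℝ) : Ic a m r θ = 48 * m ^ 2 / ζ a r θ ^ 6 := by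
  have hconj : (r : ℂ) - I * ((a * Real.cos θ : ℝ) : ℂ) = conj (ζ a r θ) := by
    rw [conj_ζ, ofReal_neg]
    ring
  rw [Ic, hconj, div_eq_mul_inv _ (ζ a r θ ^ 6), ← inv_pow, inv_ζ]
  ring

theorem hasDerivAt_ζ_r (a r θ : ℝ) : HasDerivAt (fun r' => ζ a r' θ) 1 r :=
  ofRealCLM.hasDerivAt.add_const _

theorem hasDerivAt_ζ_θ (a r θ : ℝ) :
    HasDerivAt (fun θ' => ζ a r θ') (-(a * Real.sin θ : ℝ) * I) θ := by
  have h := (((Real.hasDerivAt_cos θ).const_mul a).ofReal_comp.mul_const I).const_add (r : ℂ)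
  exact h.congr_deriv (by push_cast; ring)

theorem hasDerivAt_Ic_r (a m r θ : ℝ) (hζ : ζ a r θ ≠ 0) :
    HasDerivAt (fun r' => Ic a m r' θ) (-288 * m ^ 2 / ζ a r θ ^ 7) r := by
  simp only [Ic_eq_div_pow]
  exact ((hasDerivAt_ζ_r a r θ).const_div_pow _ 6 hζ).congr_deriv (by ring)

theorem hasDerivAt_Ic_θ (a m r θ : ℝ) (hζ : ζ a r θ ≠ 0) :
    HasDerivAt (fun θ' => Ic a m r θ')
      (-288 * m ^ 2 / ζ a r θ ^ 7 * (-(a * Real.sin θ : ℝ) * I)) θ := by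
  simp only [Ic_eq_div_pow]
  exact ((hasDerivAt_ζ_θ a r θ).const_div_pow _ 6 hζ).congr_deriv (by ring)

theorem E_eq_three_mul (a m Λ r θ : ℝ) :
    E a m Λ r θ = 3 * (Δr a m Λ r - a ^ 2 * Real.sin θ ^ 2 * Δθ a Λ θ) := by
  rw [Real.sin_sq, E, Δr, Δθ]
  ring

theorem I6_sub_I5 (a m Λ r θ : ℝ) (hρ : rho2 a r θ ≠ 0) :
    I6 a m Λ r θ - I5 a m Λ r θ =
      -(((E a m Λ r θ / (3 * rho2 a r θ) : ℝ) : ℂ) * (-288 * m ^ 2 / ζ a r θ ^ 7) ^ 2).re := by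
  have hζ := ζ_ne_zero hρ
  have hr := deriv_im_sq_sub_deriv_re_sq (hasDerivAt_Ic_r a m r θ hζ)
  have hθ := deriv_im_sq_sub_deriv_re_sq (hasDerivAt_Ic_θ a m r θ hζ)
  have hrot (w : ℂ) (s : ℝ) : (w * (-(s : ℂ) * I)) ^ 2 = ((-s ^ 2 : ℝ) : ℂ) * w ^ 2 := by
    push_cast
    linear_combination (s * w) ^ 2 * I_sq
  rw [hrot, re_ofReal_mul] at hθ
  calc I6 a m Λ r θ - I5 a m Λ r θ
      = Δr a m Λ r / rho2 a r θ * (deriv (fun r' => (Ic a m r' θ).im) r ^ 2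
            - deriv (fun r' => (Ic a m r' θ).re) r ^ 2)
        + Δθ a Λ θ / rho2 a r θ * (deriv (fun θ' => (Ic a m r θ').im) θ ^ 2
            - deriv (fun θ' => (Ic a m r θ').re) θ ^ 2) := by
        simp only [I5, I6, I1, I2]
        ring
    _ = _ := by
        rw [hr, hθ, re_ofReal_mul, E_eq_three_mul]
        field_simp
        ring

theorem I3_add_I4_mul_I (a m Λ r θ : ℝ) :
    (I3 a m Λ r θ : ℂ) + I4 a m Λ r θ * I =
      240 * m ^ 2 * E a m Λ r θ / (rho2 a r θ * ζ a r θ ^ 8) := by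
  have hpow : conj (ζ a r θ) ^ 8 = ((conj (ζ a r θ) ^ 2) ^ 2) ^ 2 := by ring
  rw [div_eq_mul_inv, mul_inv, ← inv_pow, inv_ζ, div_pow, hpow, conj_ζ]
  simp only [ofReal_add_ofReal_mul_I_sq, I3, I4]
  generalize Real.cos θ = c
  push_cast
  ring

/-- The first Abdelqader–Lake syzygy
`I₆ − I₅ + (12/5)(I₁I₃ − I₂I₄) = 0` holds for the Kerr–(anti-)de Sitter black hole. -/
theorem first_syzygy (a m Λ r θ : ℝ) (h : 0 < rho2 a r θ) :
    I6 a m Λ r θ - I5 a m Λ r θ +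
      12 / 5 * (I1 a m r θ * I3 a m Λ r θ - I2 a m r θ * I4 a m Λ r θ) = 0 := by
  have hζ := ζ_ne_zero h.ne'
  have hcomplex :
      ((E a m Λ r θ / (3 * rho2 a r θ) : ℝ) : ℂ) * (-288 * m ^ 2 / ζ a r θ ^ 7) ^ 2 =
      ((12 / 5 : ℝ) : ℂ) * (Ic a m r θ * (I3 a m Λ r θ + I4 a m Λ r θ * I)) := by
    rw [Ic_eq_div_pow, I3_add_I4_mul_I]
    push_cast
    field_simp
    ring
  rw [I6_sub_I5 _ _ _ _ _ h.ne', hcomplex, re_ofReal_mul, mul_re, I1, I2]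
  simp only [add_re, add_im, mul_re, mul_im, ofReal_re, ofReal_im, I_re, I_im]
  ring

end KerrAdS
end
end
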